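/- Let 0 < χ ≤ 1 and σ* := 2, let u^{σ*}(z) := ((1−χ) z + 1) e^{−z}/(2−χ) for z > 0 and 1/(2−χ) for z ≤ 0, and define β(z) := σ* − χ·𝟙{z<0} + 2 (u^{σ*})'(z)/u^{σ*}(z) for z ≠ 0; explicitly β(z) = 2 − χ for z < 0 and β(z) = 2(1−χ)/((1−χ) z + 1) for z > 0. Define v_∞(z) := e^{(2−χ) z} for z < 0 and v_∞(z) := ((1−χ) z + 1)² for z ≥ 0. Then v_∞ is a distributional stationary solution of ∂_s v − ∂_z² v + ∂_z(β v) = 0, i.e. for every φ ∈ C_c²(ℝ): ∫_ℝ v_∞(z) φ''(z) dz + ∫_ℝ β(z) v_∞(z) φ'(z) dz = 0; however v_∞ is not integrable: v_∞ ∉ L¹(ℝ). -/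

import Mathlib

open MeasureTheory Set Filter

noncomputable section

/-- The pulled traveling wave profile (`0 < χ ≤ 1`). -/
def uprofPulled (χ : ℝ) (z : ℝ) : ℝ :=
  if 0 < z then ((1 - χ) * z + 1) * Real.exp (-z) / (2 - χ) else 1 / (2 - χ)

/-- The ancestral-lineage drift in the pulled regime `χ ≤ 1`:
`β(z) = 2 − χ` for `z < 0` and `β(z) = 2(1−χ)/((1−χ)z + 1)` for `z > 0`. -/
def betaPulled (χ : ℝ) (z : ℝ) : ℝ :=
  if z < 0 then 2 - χ else 2 * (1 - χ) / ((1 - χ) * z + 1)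

/-- The stationary ancestral-lineage solution in the pulled regime:
`v_∞(z) = e^{(2−χ)z}` for `z < 0` and `((1−χ)z + 1)²` for `z ≥ 0`. -/
def vinfPulled (χ : ℝ) (z : ℝ) : ℝ :=
  if z < 0 then Real.exp ((2 - χ) * z) else ((1 - χ) * z + 1)^2

open Topology

/-! Away from the kink at `0`, `v_∞` is classically differentiable with `v_∞' = β v_∞`, and
it is continuous at `0`. Hence `v_∞ φ'` is continuous and compactly supported, and its
derivative `v_∞ φ'' + β v_∞ φ'` exists off a countable set and is integrable, so its integral
vanishes by the fundamental theorem of calculus with a countable exceptional set. Non-integrability holds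
because `v_∞ ≥ 1` on `(0, ∞)`, and the formula for `β` is the computation of `u'/u` on each
half-line. -/

theorem MeasureTheory.LocallyIntegrable.piecewise {X E : Type*} [MeasurableSpace X]
    [TopologicalSpace X] [NormedAddCommGroup E] {μ : Measure X} {s : Set X}
    [DecidablePred (· ∈ s)] {f g : X → E}
    (hs : MeasurableSet s) (hf : LocallyIntegrable f μ) (hg : LocallyIntegrable g μ) :
    LocallyIntegrable (s.piecewise f g) μ := by
  rw [← s.indicator_add_compl_eq_piecewise]
  exact (hf.indicator hs).add (hg.indicator hs.compl)

theorem integral_eq_zero_of_hasDerivAt_off_countable_of_hasCompactSupport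
    {E : Type*} [NormedAddCommGroup E] [NormedSpace ℝ E] [CompleteSpace E]
    {f f' : ℝ → E} {s : Set ℝ} (hs : s.Countable) (hf : Continuous f)
    (hfc : HasCompactSupport f) (hd : ∀ x ∉ s, HasDerivAt f (f' x) x)
    (hf' : Integrable f') : ∫ x, f' x = 0 := by
  obtain ⟨R, hR0, hR⟩ := hfc.isCompact.isBounded.subset_ball_lt 0 0
  rw [Real.ball_eq_Ioo, zero_sub, zero_add] at hR
  have hf_out : ∀ x ∉ Ioo (-R) R, f x = 0 := fun x hx =>
    image_eq_zero_of_notMem_tsupport fun h => hx (hR h)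
  have hf'_out : ∀ᵐ x, x ∉ Icc (-R) R → f' x = 0 := by
    filter_upwards [hs.ae_notMem volume] with x hxs hx
    exact (hd x hxs).unique (.of_notMem_tsupport fun h => hx (Ioo_subset_Icc_self (hR h)))
  calc ∫ x, f' x = ∫ x in Icc (-R) R, f' x :=
        (setIntegral_eq_integral_of_ae_compl_eq_zero hf'_out).symm
    _ = ∫ x in (-R)..R, f' x := by
      rw [intervalIntegral.integral_of_le (by linarith), integral_Icc_eq_integral_Ioc]
    _ = f R - f (-R) :=
      integral_eq_of_hasDerivAt_off_countable_of_le f f' (by linarith) hs hf.continuousOn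
        (fun x hx => hd x hx.2) hf'.intervalIntegrable
    _ = 0 := by rw [hf_out R (by simp), hf_out (-R) (by simp), sub_zero]

theorem integral_mul_deriv_add_integral_mul_eq_zero_of_hasDerivAt_off_countable
    {v v' ψ : ℝ → ℝ} {s : Set ℝ} (hs : s.Countable) (hv : Continuous v)
    (hvd : ∀ x ∉ s, HasDerivAt v (v' x) x) (hv' : LocallyIntegrable v')
    (hψ : ContDiff ℝ 1 ψ) (hψc : HasCompactSupport ψ) :
    (∫ x, v x * deriv ψ x) + ∫ x, v' x * ψ x = 0 := by
  have hvψ' : Integrable fun x => v x * deriv ψ x :=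
    hv.locallyIntegrable.integrable_smul_right_of_hasCompactSupport
      (hψ.continuous_deriv le_rfl) hψc.deriv
  have hv'ψ : Integrable fun x => v' x * ψ x :=
    hv'.integrable_smul_right_of_hasCompactSupport hψ.continuous hψc
  rw [← integral_add hvψ' hv'ψ]
  refine integral_eq_zero_of_hasDerivAt_off_countable_of_hasCompactSupport hs
    (hv.mul hψ.continuous) hψc.mul_left (fun x hx => ?_) (hvψ'.add hv'ψ)
  have := (hvd x hx).mul (hψ.differentiable one_ne_zero x).hasDerivAt
  rwa [add_comm] at this

theorem vinfPulled_eq_piecewise (χ : ℝ) :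
    vinfPulled χ = (Iio 0).piecewise (fun z => Real.exp ((2 - χ) * z))
      (fun z => ((1 - χ) * z + 1) ^ 2) := rfl

theorem continuous_vinfPulled (χ : ℝ) : Continuous (vinfPulled χ) := by
  rw [vinfPulled_eq_piecewise]
  refine Continuous.piecewise ?_ (by fun_prop) (by fun_prop)
  simp

-- Where `(1 - χ) * z + 1 = 0`, both sides vanish, the left one because `x / 0 = 0`.
theorem betaPulled_mul_vinfPulled_eq_piecewise (χ : ℝ) :
    (fun z => betaPulled χ z * vinfPulled χ z) =
      (Iio 0).piecewise (fun z => (2 - χ) * Real.exp ((2 - χ) * z))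
        (fun z => 2 * (1 - χ) * ((1 - χ) * z + 1)) := by
  ext z
  by_cases hz : z < 0
  · simp [betaPulled, vinfPulled, hz]
  · simp only [betaPulled, vinfPulled, hz, if_false, Set.piecewise, mem_Iio]
    rcases eq_or_ne ((1 - χ) * z + 1) 0 with h | h
    · simp [h]
    · field_simp

theorem hasDerivAt_vinfPulled {χ z : ℝ} (hz : z ≠ 0) :
    HasDerivAt (vinfPulled χ) (betaPulled χ z * vinfPulled χ z) z := by
  have hflux := congrFun (betaPulled_mul_vinfPulled_eq_piecewise χ) z
  rcases hz.lt_or_gt with hneg | hpos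
  · have hv : vinfPulled χ =ᶠ[𝓝 z] fun y => Real.exp ((2 - χ) * y) := by
      filter_upwards [Iio_mem_nhds hneg] with y hy using if_pos hy
    rw [hflux, piecewise_eq_of_mem _ _ _ (show z ∈ Iio 0 from hneg)]
    refine HasDerivAt.congr_of_eventuallyEq ?_ hv
    simpa [mul_comm] using ((hasDerivAt_id' z).const_mul (2 - χ)).exp
  · have hv : vinfPulled χ =ᶠ[𝓝 z] fun y => ((1 - χ) * y + 1) ^ 2 := by
      filter_upwards [Ioi_mem_nhds hpos] with y hy using if_neg (not_lt.2 hy.le)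
    rw [hflux, piecewise_eq_of_notMem _ _ _ (show z ∉ Iio 0 from not_lt.2 hpos.le)]
    refine HasDerivAt.congr_of_eventuallyEq ?_ hv
    refine ((((hasDerivAt_id' z).const_mul (1 - χ)).add_const 1).fun_pow 2).congr_deriv ?_
    push_cast
    ring

theorem locallyIntegrable_betaPulled_mul_vinfPulled (χ : ℝ) :
    LocallyIntegrable (fun z => betaPulled χ z * vinfPulled χ z) := by
  rw [betaPulled_mul_vinfPulled_eq_piecewise]
  exact .piecewise measurableSet_Iio (by fun_prop : Continuous _).locallyIntegrable
    (by fun_prop : Continuous _).locallyIntegrable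

theorem deriv_uprofPulled_of_neg {χ z : ℝ} (hz : z < 0) : deriv (uprofPulled χ) z = 0 := by
  have hu : uprofPulled χ =ᶠ[𝓝 z] fun _ => 1 / (2 - χ) := by
    filter_upwards [Iio_mem_nhds hz] with y hy using if_neg (not_lt.2 hy.le)
  rw [hu.deriv_eq, deriv_const]

theorem hasDerivAt_uprofPulled_of_pos {χ z : ℝ} (hz : 0 < z) :
    HasDerivAt (uprofPulled χ) (-(χ + (1 - χ) * z) * Real.exp (-z) / (2 - χ)) z := by
  have hu : uprofPulled χ =ᶠ[𝓝 z] fun y => ((1 - χ) * y + 1) * Real.exp (-y) / (2 - χ) := by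
    filter_upwards [Ioi_mem_nhds hz] with y hy using if_pos hy
  refine HasDerivAt.congr_of_eventuallyEq ?_ hu
  have := ((((hasDerivAt_id' z).const_mul (1 - χ)).add_const 1).mul
    (hasDerivAt_neg' z).exp).div_const (2 - χ)
  refine this.congr_deriv ?_
  ring

theorem betaPulled_eq_two_add_deriv_div_uprofPulled {χ z : ℝ} (hχ : χ ≤ 1) (hz : 0 < z) :
    betaPulled χ z = 2 + 2 * deriv (uprofPulled χ) z / uprofPulled χ z := by
  have hpos : 0 < (1 - χ) * z + 1 := by nlinarith
  have h2χ : 2 - χ ≠ 0 := by linarith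
  rw [(hasDerivAt_uprofPulled_of_pos hz).deriv]
  simp only [betaPulled, uprofPulled, not_lt.2 hz.le, if_false, if_pos hz]
  field_simp
  ring

theorem not_integrable_vinfPulled {χ : ℝ} (hχ : χ ≤ 1) : ¬ Integrable (vinfPulled χ) := by
  intro h
  have hone : IntegrableOn (fun _ => (1 : ℝ)) (Ioi (0 : ℝ)) := by
    refine h.integrableOn.mono' aestronglyMeasurable_const ?_
    filter_upwards [ae_restrict_mem measurableSet_Ioi] with z (hz : 0 < z)
    have hbase : 1 ≤ (1 - χ) * z + 1 := by nlinarith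
    simp only [norm_one, vinfPulled, not_lt.2 hz.le, if_false]
    exact one_le_pow₀ hbase
  simp at hone

theorem pulled_ancestral_no_equilibrium_general
    (χ : ℝ) (hχ1 : χ ≤ 1) :
    (∀ z : ℝ, z ≠ 0 →
      betaPulled χ z = 2 - χ * (if z < 0 then 1 else 0)
        + 2 * deriv (uprofPulled χ) z / uprofPulled χ z) ∧
    (∀ φ : ℝ → ℝ, ContDiff ℝ 2 φ → HasCompactSupport φ →
      (∫ z : ℝ, vinfPulled χ z * deriv (deriv φ) z)
        + (∫ z : ℝ, betaPulled χ z * vinfPulled χ z * deriv φ z) = 0) ∧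
    ¬ Integrable (vinfPulled χ) := by
  refine ⟨fun z hz => ?_, fun φ hφ hφc => ?_, not_integrable_vinfPulled hχ1⟩
  · rcases hz.lt_or_gt with hneg | hpos
    · simp [betaPulled, hneg, deriv_uprofPulled_of_neg hneg]
    · simp [betaPulled_eq_two_add_deriv_div_uprofPulled hχ1 hpos, not_lt.2 hpos.le]
  · exact integral_mul_deriv_add_integral_mul_eq_zero_of_hasDerivAt_off_countable
      (countable_singleton 0) (continuous_vinfPulled χ) (fun z hz => hasDerivAt_vinfPulled hz)
      (locallyIntegrable_betaPulled_mul_vinfPulled χ) hφ.deriv' hφc.deriv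

/-- In the pulled regime `0 < χ ≤ 1` with `σ* = 2`:
the drift `β` agrees with `σ* − χ𝟙{z<0} + 2(u^{σ*})'/u^{σ*}` away from `0`,
`v_∞` is a distributional stationary solution of the Fokker–Planck equation
`∂_s v − ∂_z² v + ∂_z(β v) = 0`, but `v_∞` is not integrable. -/
theorem pulled_ancestral_no_equilibrium
    (χ : ℝ) (hχ0 : 0 < χ) (hχ1 : χ ≤ 1) :
    (∀ z : ℝ, z ≠ 0 →
      betaPulled χ z = 2 - χ * (if z < 0 then 1 else 0)
        + 2 * deriv (uprofPulled χ) z / uprofPulled χ z) ∧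
    (∀ φ : ℝ → ℝ, ContDiff ℝ 2 φ → HasCompactSupport φ →
      (∫ z : ℝ, vinfPulled χ z * deriv (deriv φ) z)
        + (∫ z : ℝ, betaPulled χ z * vinfPulled χ z * deriv φ z) = 0) ∧
    ¬ Integrable (vinfPulled χ) :=
  pulled_ancestral_no_equilibrium_general χ hχ1
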